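/- For every element w of the free group F_2 on two generators a, b, one has L_w(b a) = Pal(w) · b a, where w ↦ L_w is the homomorphism F_2 → Aut(F_2) sending a to L_a and b to L_b. -/

import Mathlib

namespace PalWord

/-- The free group on two generators `a`, `b`. -/
abbrev F : Type := FreeGroup Bool

/-- The first generator `a` of the free group `F`. -/
def a : F := FreeGroup.of false

/-- The second generator `b` of the free group `F`. -/
def b : F := FreeGroup.of true

/-- The automorphism `R_a` of `F`, with `a ↦ a`, `b ↦ b a`. -/
def Ra : MulAut F :=
  MonoidHom.toMulEquiv
    (FreeGroup.lift (fun x => if x then b * a else a))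
    (FreeGroup.lift (fun x => if x then b * a⁻¹ else a))
    (by ext x; cases x <;> simp [a, b])
    (by ext x; cases x <;> simp [a, b])

/-- The automorphism `R_b` of `F`, with `a ↦ a b`, `b ↦ b`. -/
def Rb : MulAut F :=
  MonoidHom.toMulEquiv
    (FreeGroup.lift (fun x => if x then b else a * b))
    (FreeGroup.lift (fun x => if x then b else a * b⁻¹))
    (by ext x; cases x <;> simp [a, b])
    (by ext x; cases x <;> simp [a, b])

/-- The homomorphism `w ↦ R_w` from `F` to `Aut(F)`, sending `a` to `R_a` and `b` to `R_b`. -/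
def R : F →* MulAut F := FreeGroup.lift (fun x => if x then Rb else Ra)

/-- The palindromization map `Pal(w) = (a b)⁻¹ · R_w(a b)`. -/
def Pal (w : F) : F := (a * b)⁻¹ * R w (a * b)

/-- The automorphism `L_a` of `F`, with `a ↦ a`, `b ↦ a b`. -/
def La : MulAut F :=
  MonoidHom.toMulEquiv
    (FreeGroup.lift (fun x => if x then a * b else a))
    (FreeGroup.lift (fun x => if x then a⁻¹ * b else a))
    (by ext x; cases x <;> simp [a, b])
    (by ext x; cases x <;> simp [a, b])

/-- The automorphism `L_b` of `F`, with `a ↦ b a`, `b ↦ b`. -/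
def Lb : MulAut F :=
  MonoidHom.toMulEquiv
    (FreeGroup.lift (fun x => if x then b else b * a))
    (FreeGroup.lift (fun x => if x then b else b⁻¹ * a))
    (by ext x; cases x <;> simp [a, b])
    (by ext x; cases x <;> simp [a, b])

/-- The homomorphism `w ↦ L_w` sending `a` to `L_a` and `b` to `L_b`. -/
def L : F →* MulAut F := FreeGroup.lift (fun x => if x then Lb else La)


/-! `L_a = conj a ∘ R_a`, `L_b = conj b ∘ R_b`, `Pal a = a` and `Pal b = b`. Since `Pal` is a
crossed homomorphism for `R`, `w ↦ conj (Pal w) ∘ R_w` is a homomorphism, hence equal to `L`.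
Every `R_w` fixes the commutator `[b, a] = b a (a b)⁻¹`, and `R_w (a b) = a b · Pal w` by definition,
so `L_w (b a) = Pal w · [b, a] · a b · Pal w · (Pal w)⁻¹ = Pal w · b a`. -/

open scoped commutatorElement

theorem _root_.MulAut.mul_conj {G : Type*} [Group G] (φ : MulAut G) (g : G) :
    φ * MulAut.conj g = MulAut.conj (φ g) * φ := by
  ext x
  simp [MulAut.conj_apply]

theorem _root_.FreeGroup.apply_eq_self_of_forall_of {α G : Type*} [Group G]
    (φ : FreeGroup α →* MulAut G) {x : G} (h : ∀ i, φ (FreeGroup.of i) x = x) (w : FreeGroup α) :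
    φ w x = x := by
  have hstab : ⊤ ≤ (MulAction.stabilizer (MulAut G) x).comap φ := by
    rw [← FreeGroup.closure_range_of, Subgroup.closure_le]
    rintro _ ⟨i, rfl⟩
    exact h i
  exact hstab (Subgroup.mem_top w)

theorem Pal_mul (w v : F) : Pal (w * v) = Pal w * R w (Pal v) := by
  simp only [Pal, map_mul, MulAut.mul_apply, map_inv, mul_assoc, mul_inv_cancel_left]

def conjPalR : F →* MulAut F :=
  MonoidHom.mk' (fun w => MulAut.conj (Pal w) * R w) fun w v => by
    simp only [Pal_mul, map_mul, mul_assoc]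
    rw [← mul_assoc (R w), MulAut.mul_conj, mul_assoc]

theorem R_a : R a = Ra := FreeGroup.lift_apply_of

theorem R_b : R b = Rb := FreeGroup.lift_apply_of

theorem L_a : L a = La := FreeGroup.lift_apply_of

theorem L_b : L b = Lb := FreeGroup.lift_apply_of

theorem Ra_a : Ra a = a := by simp [Ra, a, MonoidHom.toMulEquiv]

theorem Ra_b : Ra b = b * a := by simp [Ra, a, b, MonoidHom.toMulEquiv]

theorem Rb_a : Rb a = a * b := by simp [Rb, a, b, MonoidHom.toMulEquiv]

theorem Rb_b : Rb b = b := by simp [Rb, b, MonoidHom.toMulEquiv]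

theorem Pal_a : Pal a = a := by
  rw [Pal, R_a, map_mul, Ra_a, Ra_b]
  group

theorem Pal_b : Pal b = b := by
  rw [Pal, R_b, map_mul, Rb_a, Rb_b]
  group

theorem La_eq : La = MulAut.conj a * Ra :=
  MulEquiv.toMonoidHom_injective <| FreeGroup.ext_hom _ _ fun i => by
    cases i <;> simp [La, Ra, a, b, MonoidHom.toMulEquiv, MulAut.conj_apply, mul_assoc]

theorem Lb_eq : Lb = MulAut.conj b * Rb :=
  MulEquiv.toMonoidHom_injective <| FreeGroup.ext_hom _ _ fun i => by
    cases i <;> simp [Lb, Rb, a, b, MonoidHom.toMulEquiv, MulAut.conj_apply, mul_assoc]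

theorem L_eq_conjPalR : L = conjPalR :=
  FreeGroup.ext_hom _ _ fun i => by
    cases i
    · change L a = MulAut.conj (Pal a) * R a
      rw [L_a, R_a, Pal_a, La_eq]
    · change L b = MulAut.conj (Pal b) * R b
      rw [L_b, R_b, Pal_b, Lb_eq]

theorem R_apply_commutator (w : F) : R w ⁅b, a⁆ = ⁅b, a⁆ := by
  refine FreeGroup.apply_eq_self_of_forall_of R (fun i => ?_) w
  cases i
  · change R a ⁅b, a⁆ = ⁅b, a⁆
    rw [map_commutatorElement, R_a, Ra_a, Ra_b, commutatorElement_def, commutatorElement_def]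
    group
  · change R b ⁅b, a⁆ = ⁅b, a⁆
    rw [map_commutatorElement, R_b, Rb_a, Rb_b, commutatorElement_def, commutatorElement_def]
    group

/-- For every `w`, `L_w(b a) = Pal(w) · b a`. -/
theorem Lw_ba (w : F) : L w (b * a) = Pal w * (b * a) := by
  have hba : b * a = ⁅b, a⁆ * (a * b) := by rw [commutatorElement_def]; group
  have hab : R w (a * b) = a * b * Pal w := by rw [Pal, mul_inv_cancel_left]
  calc L w (b * a) = Pal w * R w (b * a) * (Pal w)⁻¹ := by
        rw [L_eq_conjPalR, conjPalR, MonoidHom.mk'_apply, MulAut.mul_apply, MulAut.conj_apply]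
    _ = Pal w * (⁅b, a⁆ * (a * b * Pal w)) * (Pal w)⁻¹ := by
        conv_lhs => rw [hba, map_mul, R_apply_commutator, hab]
    _ = Pal w * (b * a) := by rw [commutatorElement_def]; group

end PalWord
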